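/- Let p be a prime and let j, k be distinct primes with 2 < j < p − 2 and 2 < k < p − 2. Then the bivariate polynomial P_k(x) − P_j(y) ∈ F_p[x,y] is absolutely irreducible over F_p, where P_j(x) = ∏_{i=1}^{j} (x+i) and P_k(x) = ∏_{i=1}^{k} (x+i). -/

import Mathlib

/-!
Give `x` weight `deg P_j = j` and `y` weight `deg P_k = k`. The weighted leading form of
`P_k(x) - P_j(y)` is `x^k - y^j`, which is irreducible over any field because `j ≠ k` are primes.
Scaling `x ↦ t^j x`, `y ↦ t^k y` and taking the leading coefficient in `t` is multiplicative,
and a polynomial is a unit as soon as its weighted leading form is; so any factorisation of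
`P_k(x) - P_j(y)` would induce one of `x^k - y^j`.
-/

open MvPolynomial

/-- `P_j(x) = ∏_{i=1}^{j} (x + i)` over `ZMod p`. -/
noncomputable def Pfact (p j : ℕ) : Polynomial (ZMod p) :=
  ∏ i ∈ Finset.Icc 1 j, (Polynomial.X + Polynomial.C (i : ZMod p))

namespace Polynomial

open scoped Polynomial

theorem irreducible_X_pow_sub_C_X_pow {L : Type*} [Field L] {m n : ℕ}
    (hm : m.Prime) (hn : n.Prime) (hmn : m ≠ n) :
    Irreducible (X ^ n - C (X ^ m) : L[X][X]) := by
  have hmonic : (X ^ n - C (X ^ m) : L[X][X]).Monic := monic_X_pow_sub_C _ hn.ne_zero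
  rw [hmonic.irreducible_iff_irreducible_map_fraction_map (K := FractionRing L[X]),
    Polynomial.map_sub, Polynomial.map_pow, map_X, map_C]
  refine X_pow_sub_C_irreducible_of_prime hn fun b hb => hmn ?_
  -- an `n`-th root of `X ^ m` is integral over the integrally closed ring `L[X]`
  obtain ⟨q, rfl⟩ := IsIntegrallyClosed.isIntegral_iff.mp
    (⟨X ^ n - C (X ^ m), hmonic, by simp [hb]⟩ : IsIntegral L[X] b)
  have hq : q ^ n = X ^ m :=
    IsFractionRing.injective L[X] (FractionRing L[X]) (by rwa [map_pow])
  have hdeg : n * q.natDegree = m := by simpa using congrArg natDegree hq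
  exact ((Nat.prime_dvd_prime_iff_eq hn hm).mp ⟨_, hdeg.symm⟩).symm

section Monic

variable {R S : Type*} [CommSemiring R] [CommRing S] [IsDomain S] [Algebra R S] {f : R[X]}

theorem Monic.natDegree_aeval_C_mul_X_pow (hf : f.Monic) {a : S} (ha : a ≠ 0) (n : ℕ) :
    (aeval (C a * X ^ n) f).natDegree = f.natDegree * n := by
  rw [← aeval_map_algebraMap S, ← comp_eq_aeval, natDegree_comp, natDegree_C_mul_X_pow n a ha,
    hf.natDegree_map]

theorem Monic.leadingCoeff_aeval_C_mul_X_pow (hf : f.Monic) {a : S} (ha : a ≠ 0) {n : ℕ}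
    (hn : n ≠ 0) : (aeval (C a * X ^ n) f).leadingCoeff = a ^ f.natDegree := by
  rw [← aeval_map_algebraMap S, ← comp_eq_aeval,
    leadingCoeff_comp (by rwa [natDegree_C_mul_X_pow n a ha]), leadingCoeff_C_mul_X_pow,
    (hf.map _).leadingCoeff, one_mul, hf.natDegree_map]

theorem Monic.degree_aeval_C_mul_X_pow (hf : f.Monic) {a : S} (ha : a ≠ 0) {n : ℕ}
    (hn : n ≠ 0) : (aeval (C a * X ^ n) f).degree = ((f.natDegree * n : ℕ) : WithBot ℕ) := by
  have hlc := hf.leadingCoeff_aeval_C_mul_X_pow ha hn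
  rw [degree_eq_natDegree (leadingCoeff_ne_zero.mp (hlc ▸ pow_ne_zero _ ha)),
    hf.natDegree_aeval_C_mul_X_pow ha]

end Monic

end Polynomial

namespace MvPolynomial

theorem irreducible_X_pow_sub_X_pow {L : Type*} [Field L] {m n : ℕ}
    (hm : m.Prime) (hn : n.Prime) (hmn : m ≠ n) :
    Irreducible (X 0 ^ m - X 1 ^ n : MvPolynomial (Fin 2) L) := by
  rw [← neg_sub]
  refine (Associated.refl _).neg_right.irreducible ?_
  simpa using (Polynomial.irreducible_X_pow_sub_C_X_pow hm hn hmn).map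
    (Polynomial.Bivariate.equivMvPolynomial L)

theorem map_aeval_X {R S σ : Type*} [CommSemiring R] [CommSemiring S] (φ : R →+* S) (i : σ)
    (f : Polynomial R) :
    map φ (Polynomial.aeval (X i) f) = Polynomial.aeval (X i) (f.map φ) := by
  simp [Polynomial.aeval_def, Polynomial.hom_eval₂, Polynomial.eval₂_map]

section WeightedScaling

variable {σ R : Type*} [CommSemiring R] (w : σ → ℕ)

noncomputable def weightedScaling : MvPolynomial σ R →ₐ[R] Polynomial (MvPolynomial σ R) :=
  aeval fun i => Polynomial.C (X i) * Polynomial.X ^ w i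

theorem weightedScaling_monomial (d : σ →₀ ℕ) (r : R) :
    weightedScaling w (monomial d r) =
      Polynomial.C (monomial d r) * Polynomial.X ^ Finsupp.weight w d := by
  rw [weightedScaling, aeval_monomial]
  conv_rhs => rw [monomial_eq]
  simp only [Finsupp.prod, Finsupp.weight_apply, Finsupp.sum, mul_pow, Finset.prod_mul_distrib,
    ← pow_mul, Finset.prod_pow_eq_pow_sum, map_mul, map_prod, Polynomial.C_pow, smul_eq_mul,
    Polynomial.algebraMap_apply, algebraMap_eq, mul_comm (w _)]
  ring

theorem coeff_weightedScaling (A : MvPolynomial σ R) (n : ℕ) :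
    (weightedScaling w A).coeff n = weightedHomogeneousComponent w n A := by
  classical
  induction A using MvPolynomial.induction_on' with
  | monomial d r =>
    ext m
    rw [weightedScaling_monomial, Polynomial.coeff_C_mul_X_pow,
      coeff_weightedHomogeneousComponent, coeff_monomial]
    by_cases hdm : d = m <;> split_ifs <;> simp_all [coeff_monomial]
  | add A B hA hB => rw [map_add, Polynomial.coeff_add, hA, hB, map_add]

theorem leadingCoeff_weightedScaling (A : MvPolynomial σ R) :
    (weightedScaling w A).leadingCoeff =
      weightedHomogeneousComponent w (weightedTotalDegree w A) A := by
  classical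
  rcases eq_or_ne A 0 with rfl | hA
  · simp
  obtain ⟨d, hd, hdeg⟩ : ∃ d ∈ A.support, weightedTotalDegree w A = Finsupp.weight w d :=
    Finset.exists_mem_eq_sup A.support (support_nonempty.mpr hA) (Finsupp.weight w)
  have htop : weightedHomogeneousComponent w (weightedTotalDegree w A) A ≠ 0 := by
    refine ne_of_apply_ne (coeff d) ?_
    rwa [coeff_weightedHomogeneousComponent, if_pos hdeg.symm, coeff_zero, ← mem_support_iff]
  have hnat : (weightedScaling w A).natDegree = weightedTotalDegree w A := by
    refine le_antisymm (Polynomial.natDegree_le_iff_coeff_eq_zero.mpr fun n hn => ?_)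
      (Polynomial.le_natDegree_of_ne_zero (by rwa [coeff_weightedScaling]))
    rw [coeff_weightedScaling, weightedHomogeneousComponent_eq_zero _ _ (by exact_mod_cast hn)]
  rw [Polynomial.leadingCoeff, hnat, coeff_weightedScaling]

end WeightedScaling

section WeightedLeadingCoeff

variable {σ R : Type*} [CommRing R] [IsDomain R] (w : σ → ℕ)

theorem isUnit_of_isUnit_leadingCoeff_weightedScaling {A : MvPolynomial σ R}
    (h : IsUnit (weightedScaling w A).leadingCoeff) : IsUnit A := by
  rw [leadingCoeff_weightedScaling] at h
  obtain ⟨r, -, hr⟩ := isUnit_iff_eq_C_of_isReduced.mp h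
  have hdeg : weightedTotalDegree w A = 0 :=
    (weightedHomogeneousComponent_isWeightedHomogeneous _ A).inj_right h.ne_zero
      (hr ▸ isWeightedHomogeneous_C w r)
  have hA : IsWeightedHomogeneous w A 0 :=
    isWeightedHomogeneous_zero_iff_weightedTotalDegree_eq_zero.mpr hdeg
  rwa [hdeg, hA.weightedHomogeneousComponent_same] at h

theorem irreducible_of_irreducible_leadingCoeff_weightedScaling {F : MvPolynomial σ R}
    (h : Irreducible (weightedScaling w F).leadingCoeff) : Irreducible F :=
  let φ := Polynomial.leadingCoeffHom.comp (weightedScaling (R := R) w).toMonoidHom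
  haveI : IsLocalHom φ := ⟨fun _ => isUnit_of_isUnit_leadingCoeff_weightedScaling w⟩
  Irreducible.of_map (f := φ) h

end WeightedLeadingCoeff

theorem irreducible_aeval_X_sub_aeval_X {L : Type*} [Field L] {f g : Polynomial L}
    (hf : f.Monic) (hg : g.Monic) (hf_prime : f.natDegree.Prime) (hg_prime : g.natDegree.Prime)
    (hfg : f.natDegree ≠ g.natDegree) :
    Irreducible (Polynomial.aeval (X 0) f - Polynomial.aeval (X 1) g :
      MvPolynomial (Fin 2) L) := by
  set k := f.natDegree
  set j := g.natDegree
  have hirr : Irreducible (X 0 ^ k - X 1 ^ j : MvPolynomial (Fin 2) L) :=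
    irreducible_X_pow_sub_X_pow hf_prime hg_prime hfg
  refine irreducible_of_irreducible_leadingCoeff_weightedScaling ![j, k] ?_
  have hscale (i : Fin 2) (q : Polynomial L) :
      weightedScaling ![j, k] (Polynomial.aeval (X i : MvPolynomial (Fin 2) L) q) =
        Polynomial.aeval (Polynomial.C (X i) * Polynomial.X ^ ![j, k] i) q := by
    rw [← Polynomial.aeval_algHom_apply, weightedScaling, aeval_X]
  have hx := hf.leadingCoeff_aeval_C_mul_X_pow (X_ne_zero (R := L) (0 : Fin 2)) hg_prime.ne_zero
  have hy := hg.leadingCoeff_aeval_C_mul_X_pow (X_ne_zero (R := L) (1 : Fin 2)) hf_prime.ne_zero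
  rw [map_sub, hscale, hscale]
  simp only [Matrix.cons_val_zero, Matrix.cons_val_one]
  rwa [Polynomial.leadingCoeff_sub_of_degree_eq, hx, hy]
  · rw [hf.degree_aeval_C_mul_X_pow (X_ne_zero _) hg_prime.ne_zero,
      hg.degree_aeval_C_mul_X_pow (X_ne_zero _) hf_prime.ne_zero, mul_comm]
  · rw [hx, hy]
    exact sub_ne_zero.mp hirr.ne_zero

end MvPolynomial

theorem monic_Pfact (p j : ℕ) : (Pfact p j).Monic :=
  Polynomial.monic_prod_of_monic _ _ fun _ _ => Polynomial.monic_X_add_C _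

theorem natDegree_Pfact (p j : ℕ) [Fact (1 < p)] : (Pfact p j).natDegree = j := by
  rw [Pfact, Polynomial.natDegree_prod_of_monic _ _ fun _ _ => Polynomial.monic_X_add_C _]
  simp only [Polynomial.natDegree_X_add_C, Finset.sum_const, Nat.card_Icc, smul_eq_mul, mul_one,
    Nat.add_sub_cancel]

theorem Pfact_difference_absolutely_irreducible_general (p : ℕ) [Fact p.Prime]
    (j k : ℕ) (hj : j.Prime) (hk : k.Prime) (hjk : j ≠ k) :
    Irreducible (MvPolynomial.map (algebraMap (ZMod p) (AlgebraicClosure (ZMod p)))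
      (Polynomial.aeval (X 0 : MvPolynomial (Fin 2) (ZMod p)) (Pfact p k) -
        Polynomial.aeval (X 1 : MvPolynomial (Fin 2) (ZMod p)) (Pfact p j))) := by
  have hdeg (n : ℕ) :
      ((Pfact p n).map (algebraMap (ZMod p) (AlgebraicClosure (ZMod p)))).natDegree = n := by
    rw [(monic_Pfact p n).natDegree_map, natDegree_Pfact]
  rw [map_sub, map_aeval_X, map_aeval_X]
  exact irreducible_aeval_X_sub_aeval_X ((monic_Pfact p k).map _) ((monic_Pfact p j).map _)
    (by rwa [hdeg]) (by rwa [hdeg]) (by rwa [hdeg, hdeg, ne_comm])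

/-- **Lemma 7 (off-diagonal case).** For distinct primes `2 < j, k < p − 2`, the polynomial
`P_k(x) − P_j(y)` is absolutely irreducible over `F_p`. -/
theorem Pfact_difference_absolutely_irreducible (p : ℕ) [Fact p.Prime]
    (j k : ℕ) (hj : j.Prime) (hk : k.Prime) (hjk : j ≠ k)
    (h2j : 2 < j) (hjp : j + 2 < p) (h2k : 2 < k) (hkp : k + 2 < p) :
    Irreducible (MvPolynomial.map (algebraMap (ZMod p) (AlgebraicClosure (ZMod p)))
      (Polynomial.aeval (X 0 : MvPolynomial (Fin 2) (ZMod p)) (Pfact p k) -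
        Polynomial.aeval (X 1 : MvPolynomial (Fin 2) (ZMod p)) (Pfact p j))) :=
  Pfact_difference_absolutely_irreducible_general p j k hj hk hjk
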